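/- arXiv:1909.05304 — 3 statements merged into one kernel-verified Lean document; each statement's English description precedes it below -/
import Mathlib

section
/- For every ν with 0 < ν ≤ 1, every real reward r > 0, and every discount factor γ satisfying ((√(1/ν² + 2/ν − 3) − 1)·ν + 1)/(2ν) < γ < 1 (and γ ≥ 0), the infinite-horizon expected discounted return of action 'left' strictly exceeds that of action 'right': ∑_{k=0}^{∞} r·γ^{3k+2} > ∑_{k=0}^{∞} (1−ν)·r·γ^k. -/
/-- For `0 < ν ≤ 1`, `r > 0`, and any discount factor `γ ∈ [0,1)` exceeding the
larger root of the quadratic `ν·γ² − (1−ν)·γ − (1−ν) = 0`, the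
infinite-horizon expected discounted return of action `left` strictly exceeds
that of action `right`. -/
theorem counterexample_left_beats_right (ν r γ : ℝ)
    (hν0 : 0 < ν) (hν1 : ν ≤ 1) (hr : 0 < r)
    (hγ0 : 0 ≤ γ) (hγ1 : γ < 1)
    (hγlow : ((Real.sqrt (1 / ν ^ 2 + 2 / ν - 3) - 1) * ν + 1) / (2 * ν) < γ) :
    (∑' k : ℕ, r * γ ^ (3 * k + 2)) > (∑' k : ℕ, (1 - ν) * r * γ ^ k) := by
  set s := Real.sqrt (1 / ν ^ 2 + 2 / ν - 3) with hs
  have hννpos : (0:ℝ) < ν ^ 2 := by positivity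
  have harg : (0:ℝ) ≤ 1 / ν ^ 2 + 2 / ν - 3 := by
    rw [div_add_div _ _ (ne_of_gt hννpos) (ne_of_gt hν0), sub_nonneg]
    rw [le_div_iff₀ (by positivity)]
    nlinarith
  have hs0 : 0 ≤ s := Real.sqrt_nonneg _
  have hs2 : s ^ 2 = 1 / ν ^ 2 + 2 / ν - 3 := Real.sq_sqrt harg
  have hγlow' : (s - 1) * ν + 1 < γ * (2 * ν) := by
    rwa [div_lt_iff₀ (by positivity)] at hγlow
  -- key quadratic inequality
  have key : ν * γ ^ 2 - (1 - ν) * γ - (1 - ν) > 0 := by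
    have h1 : s * ν < 2 * ν * γ + ν - 1 := by nlinarith
    have h2 : s ^ 2 * ν ^ 2 = 1 + 2 * ν - 3 * ν ^ 2 := by
      rw [hs2]; field_simp
    have hsq : (s * ν) ^ 2 < (2 * ν * γ + ν - 1) ^ 2 := by
      nlinarith [mul_nonneg hs0 hν0.le]
    nlinarith [mul_pos hν0 hν0, hsq, h2]
  have hγ3 : γ ^ 3 < 1 := by nlinarith
  have hγ30 : (0:ℝ) ≤ γ ^ 3 := by positivity
  have habs3 : |γ ^ 3| < 1 := by rwa [abs_of_nonneg hγ30]
  have habs : |γ| < 1 := by rwa [abs_of_nonneg hγ0]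
  have hL : (∑' k : ℕ, r * γ ^ (3 * k + 2)) = (r * γ ^ 2) * (1 - γ ^ 3)⁻¹ := by
    have : ∀ k : ℕ, r * γ ^ (3 * k + 2) = (r * γ ^ 2) * (γ ^ 3) ^ k := by
      intro k; rw [← pow_mul]; ring
    rw [tsum_congr this, tsum_mul_left, tsum_geometric_of_lt_one hγ30 hγ3]
  have hR : (∑' k : ℕ, (1 - ν) * r * γ ^ k) = ((1 - ν) * r) * (1 - γ)⁻¹ := by
    rw [tsum_mul_left, tsum_geometric_of_lt_one hγ0 hγ1]
  rw [hL, hR]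
  have h1γ : (0:ℝ) < 1 - γ := by linarith
  have h1γ3 : (0:ℝ) < 1 - γ ^ 3 := by linarith
  rw [gt_iff_lt, ← div_eq_mul_inv, ← div_eq_mul_inv, div_lt_div_iff₀ h1γ h1γ3]
  nlinarith [mul_pos hr key, mul_pos (mul_pos hr key) h1γ]
end

section
/- Fix a natural number n ≥ 1, a real ν with 0 < ν < 1, and a real reward r > 0. Then there exists γ₀ ∈ (0,1) such that for every discount factor γ with γ₀ < γ < 1, the n-reward expected discounted return of action 'left' strictly exceeds that of action 'right': γ²·r·(1−γ^{3n})/(1−γ³) > (1−ν)·r·(1−γ^n)/(1−γ). -/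
/-- For `n ≥ 1`, `0 < ν < 1` and `r > 0`, there exists a threshold
`γ₀ ∈ (0,1)` such that for every discount factor `γ` with `γ₀ < γ < 1`, the
`n`-reward expected discounted return of action `left` strictly exceeds that
of action `right`. -/
theorem counterexample_eventually_left_beats_right (n : ℕ) (hn : 1 ≤ n)
    (ν r : ℝ) (hν0 : 0 < ν) (hν1 : ν < 1) (hr : 0 < r) :
    ∃ γ₀ ∈ Set.Ioo (0 : ℝ) 1, ∀ γ : ℝ, γ₀ < γ → γ < 1 →
      γ ^ 2 * r * (1 - γ ^ (3 * n)) / (1 - γ ^ 3)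
        > (1 - ν) * r * (1 - γ ^ n) / (1 - γ) := by
  set h : ℝ → ℝ := fun γ =>
    γ ^ 2 * r * (∑ i ∈ Finset.range n, (γ ^ 3) ^ i)
      - (1 - ν) * r * (∑ i ∈ Finset.range n, γ ^ i) with hh
  have hcont : Continuous h := by
    apply Continuous.sub <;> apply Continuous.mul <;> fun_prop
  have h1 : 0 < h 1 := by
    have : h 1 = ν * r * n := by simp [hh]; ring
    rw [this]
    have hn' : (0:ℝ) < n := by exact_mod_cast hn
    positivity
  have hopen : IsOpen {x : ℝ | 0 < h x} := isOpen_lt continuous_const hcont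
  obtain ⟨δ, hδ0, hball⟩ := Metric.isOpen_iff.mp hopen 1 h1
  refine ⟨max (1 - δ) (1/2), ⟨lt_max_of_lt_right (by norm_num),
    max_lt (by linarith) (by norm_num)⟩, ?_⟩
  intro γ hγ hγ1
  have hγhalf : (1:ℝ)/2 < γ := lt_of_le_of_lt (le_max_right _ _) hγ
  have hγ0 : 0 < γ := by linarith
  have hγδ : 1 - δ < γ := lt_of_le_of_lt (le_max_left _ _) hγ
  have hmem : γ ∈ Metric.ball (1:ℝ) δ := by
    rw [Metric.mem_ball, Real.dist_eq, abs_sub_lt_iff]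
    constructor <;> linarith
  have hpos : 0 < h γ := hball hmem
  have hne : γ ≠ 1 := ne_of_lt hγ1
  have hne3 : γ ^ 3 ≠ 1 := by
    intro hc
    have : γ ^ 3 < 1 ^ 3 := pow_lt_pow_left₀ hγ1 (le_of_lt hγ0) (by norm_num)
    simp [hc] at this
  have e1 : (∑ i ∈ Finset.range n, γ ^ i) = (1 - γ ^ n) / (1 - γ) := by
    rw [geom_sum_eq hne, ← neg_div_neg_eq]; ring_nf
  have e2 : (∑ i ∈ Finset.range n, (γ ^ 3) ^ i) = (1 - γ ^ (3 * n)) / (1 - γ ^ 3) := by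
    rw [geom_sum_eq hne3, ← neg_div_neg_eq, ← pow_mul]; ring_nf
  have := hpos
  rw [hh] at this
  simp only [e1, e2] at this
  rw [gt_iff_lt, ← sub_pos]
  calc (0:ℝ) < _ := this
    _ = γ ^ 2 * r * (1 - γ ^ (3 * n)) / (1 - γ ^ 3)
        - (1 - ν) * r * (1 - γ ^ n) / (1 - γ) := by ring
end

section
/- Let r > 0 be real. Let a : ℕ → ℝ satisfy 0 ≤ a_k ≤ r for all k and a_k = r for infinitely many k, and let b : ℕ → ℝ satisfy 0 ≤ b_k ≤ r for all k and b_k = 0 for all k ≥ N, for some N ∈ ℕ. Then there exists γ₀ ∈ (0,1) such that for every γ with γ₀ < γ < 1, the discounted sums satisfy ∑_{k=0}^{∞} γ^k·a_k > ∑_{k=0}^{∞} γ^k·b_k (both series converge for every γ ∈ [0,1)). -/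
/-!
Among the indices where `a k = r` pick `N + 1` of them, all at most some `K`. Then for
`0 ≤ γ < 1` the discounted sum of `a` is at least `(N + 1) r γ ^ K`, while that of `b` is at most
`N r`, since `b` has at most `N` nonzero terms, each at most `r`. As `γ → 1⁻`,
`(N + 1) γ ^ K → N + 1 > N`.
-/

open Filter Topology Finset

theorem exists_Ioo_forall_of_eventually_nhdsLT {a : ℝ} (ha : 0 < a) {p : ℝ → Prop}
    (h : ∀ᶠ x in 𝓝[<] a, p x) : ∃ x₀ ∈ Set.Ioo 0 a, ∀ x, x₀ < x → x < a → p x := by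
  obtain ⟨x₀, hx₀, hsub⟩ :=
    (mem_nhdsLT_iff_exists_mem_Ico_Ioo_subset (half_lt_self ha)).mp h
  exact ⟨x₀, ⟨(half_pos ha).trans_le hx₀.1, hx₀.2⟩, fun x h₀ h₁ => hsub ⟨h₀, h₁⟩⟩

theorem eventually_lt_mul_pow_nhds_one {c x : ℝ} (hc : c < x) (K : ℕ) :
    ∀ᶠ γ in 𝓝 (1 : ℝ), c < x * γ ^ K := by
  have hlim : Tendsto (fun γ : ℝ => x * γ ^ K) (𝓝 1) (𝓝 x) := by
    simpa using ((continuous_pow K).const_mul x).tendsto (1 : ℝ)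
  exact hlim.eventually (lt_mem_nhds hc)

theorem hasSum_sum_range_of_forall_ge_eq_zero {f : ℕ → ℝ} {N : ℕ}
    (hf : ∀ k, N ≤ k → f k = 0) : HasSum f (∑ k ∈ range N, f k) :=
  hasSum_sum_of_ne_finset_zero fun k hk => hf k (by simpa using hk)

section DiscountedSum

variable {γ r : ℝ} {a b : ℕ → ℝ}

theorem summable_pow_mul_of_nonneg_of_le (hγ0 : 0 ≤ γ) (hγ1 : γ < 1)
    (ha0 : ∀ k, 0 ≤ a k) (har : ∀ k, a k ≤ r) : Summable fun k => γ ^ k * a k :=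
  ((summable_geometric_of_lt_one hγ0 hγ1).mul_right r).of_nonneg_of_le
    (fun k => mul_nonneg (pow_nonneg hγ0 k) (ha0 k))
    (fun k => mul_le_mul_of_nonneg_left (har k) (pow_nonneg hγ0 k))

theorem hasSum_pow_mul_of_forall_ge_eq_zero {N : ℕ} (hbN : ∀ k, N ≤ k → b k = 0) :
    HasSum (fun k => γ ^ k * b k) (∑ k ∈ range N, γ ^ k * b k) :=
  hasSum_sum_range_of_forall_ge_eq_zero fun k hk => by rw [hbN k hk, mul_zero]

theorem tsum_pow_mul_le_of_forall_ge_eq_zero {N : ℕ} (hγ0 : 0 ≤ γ) (hγ1 : γ ≤ 1) (hr : 0 ≤ r)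
    (hbr : ∀ k, b k ≤ r) (hbN : ∀ k, N ≤ k → b k = 0) :
    ∑' k, γ ^ k * b k ≤ N * r := by
  rw [(hasSum_pow_mul_of_forall_ge_eq_zero hbN).tsum_eq]
  calc ∑ k ∈ range N, γ ^ k * b k ≤ ∑ _k ∈ range N, r := by
        refine sum_le_sum fun k _ => ?_
        calc γ ^ k * b k ≤ γ ^ k * r := mul_le_mul_of_nonneg_left (hbr k) (pow_nonneg hγ0 k)
          _ ≤ r := mul_le_of_le_one_left hr (pow_le_one₀ hγ0 hγ1)
    _ = N * r := by rw [sum_const, card_range, nsmul_eq_mul]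

theorem exists_forall_mul_pow_le_tsum_pow_mul (hr : 0 ≤ r) (ha0 : ∀ k, 0 ≤ a k)
    (har : ∀ k, a k ≤ r) (hainf : {k : ℕ | a k = r}.Infinite) (n : ℕ) :
    ∃ K : ℕ, ∀ γ : ℝ, 0 ≤ γ → γ < 1 → n * (r * γ ^ K) ≤ ∑' k, γ ^ k * a k := by
  obtain ⟨t, hta, htn⟩ := hainf.exists_subset_card_eq n
  refine ⟨t.sup id, fun γ hγ0 hγ1 => ?_⟩
  have hterm : ∀ k ∈ t, r * γ ^ t.sup id ≤ γ ^ k * a k := fun k hk => by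
    rw [hta hk, mul_comm]
    exact mul_le_mul_of_nonneg_right
      (pow_le_pow_of_le_one hγ0 hγ1.le (le_sup (f := id) hk)) hr
  calc (n : ℝ) * (r * γ ^ t.sup id) = ∑ _k ∈ t, r * γ ^ t.sup id := by
        rw [sum_const, htn, nsmul_eq_mul]
    _ ≤ ∑ k ∈ t, γ ^ k * a k := sum_le_sum hterm
    _ ≤ ∑' k, γ ^ k * a k :=
        (summable_pow_mul_of_nonneg_of_le hγ0 hγ1 ha0 har).sum_le_tsum t
          fun k _ => mul_nonneg (pow_nonneg hγ0 k) (ha0 k)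

end DiscountedSum

theorem infinitely_often_beats_finitely_many_general (r : ℝ) (hr : 0 < r)
    (a b : ℕ → ℝ) (N : ℕ)
    (ha0 : ∀ k, 0 ≤ a k) (har : ∀ k, a k ≤ r)
    (hainf : {k : ℕ | a k = r}.Infinite)
    (hbr : ∀ k, b k ≤ r)
    (hbN : ∀ k, N ≤ k → b k = 0) :
    (∀ γ : ℝ, 0 ≤ γ → γ < 1 →
      Summable (fun k : ℕ => γ ^ k * a k) ∧ Summable (fun k : ℕ => γ ^ k * b k)) ∧
    ∃ γ₀ ∈ Set.Ioo (0 : ℝ) 1, ∀ γ : ℝ, γ₀ < γ → γ < 1 →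
      (∑' k : ℕ, γ ^ k * a k) > (∑' k : ℕ, γ ^ k * b k) := by
  refine ⟨fun γ hγ0 hγ1 => ⟨summable_pow_mul_of_nonneg_of_le hγ0 hγ1 ha0 har,
    (hasSum_pow_mul_of_forall_ge_eq_zero hbN).summable⟩, ?_⟩
  obtain ⟨K, hK⟩ := exists_forall_mul_pow_le_tsum_pow_mul hr.le ha0 har hainf (N + 1)
  obtain ⟨γ₀, hγ₀, hnear⟩ := exists_Ioo_forall_of_eventually_nhdsLT one_pos
    ((eventually_lt_mul_pow_nhds_one (lt_add_one (N : ℝ)) K).filter_mono nhdsWithin_le_nhds)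
  refine ⟨γ₀, hγ₀, fun γ hγ₀γ hγ1 => ?_⟩
  have hγ0 : 0 ≤ γ := hγ₀.1.le.trans hγ₀γ.le
  calc ∑' k, γ ^ k * b k ≤ N * r :=
        tsum_pow_mul_le_of_forall_ge_eq_zero hγ0 hγ1.le hr.le hbr hbN
    _ < (N + 1) * γ ^ K * r := mul_lt_mul_of_pos_right (hnear γ hγ₀γ hγ1) hr
    _ = ((N + 1 : ℕ) : ℝ) * (r * γ ^ K) := by push_cast; ring
    _ ≤ ∑' k, γ ^ k * a k := hK γ hγ0 hγ1

/-- Key quantitative step of Theorem 2: if rewards `a` (each in `[0,r]`) equal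
`r` infinitely often while rewards `b` (each in `[0,r]`) vanish from some time
`N` on, then for `γ` close enough to `1` the discounted sum of `a` strictly
exceeds that of `b`; both discounted series converge for every `γ ∈ [0,1)`. -/
theorem infinitely_often_beats_finitely_many (r : ℝ) (hr : 0 < r)
    (a b : ℕ → ℝ) (N : ℕ)
    (ha0 : ∀ k, 0 ≤ a k) (har : ∀ k, a k ≤ r)
    (hainf : {k : ℕ | a k = r}.Infinite)
    (hb0 : ∀ k, 0 ≤ b k) (hbr : ∀ k, b k ≤ r)
    (hbN : ∀ k, N ≤ k → b k = 0) :
    (∀ γ : ℝ, 0 ≤ γ → γ < 1 →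
      Summable (fun k : ℕ => γ ^ k * a k) ∧ Summable (fun k : ℕ => γ ^ k * b k)) ∧
    ∃ γ₀ ∈ Set.Ioo (0 : ℝ) 1, ∀ γ : ℝ, γ₀ < γ → γ < 1 →
      (∑' k : ℕ, γ ^ k * a k) > (∑' k : ℕ, γ ^ k * b k) :=
  infinitely_often_beats_finitely_many_general r hr a b N ha0 har hainf hbr hbN
end
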